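/- Let G be a DAG satisfying (CL): for every v ∈ V(G), lca(𝒞(v)) is defined. Then 𝒞(lca(𝒞(v))) = 𝒞(v) for all v ∈ V(G). -/

import Mathlib

/-! Since the graph is finite and acyclic, some `⪯`-minimal common ancestor of `𝒞(v)` lies below `v`;
by uniqueness it is `w`, so `w ⪯ v` gives `𝒞(w) ⊆ 𝒞(v)`, while `𝒞(v) ⊆ 𝒞(w)` holds because `w` is a
common ancestor of `𝒞(v)`. -/

namespace Dag

variable {V : Type*}

/-- Reachability order of a digraph: `v ⪯ w` iff there is a directed path from `w` to `v`. -/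
def reach (adj : V → V → Prop) (v w : V) : Prop :=
  Relation.ReflTransGen (fun a b => adj b a) v w

/-- The digraph is acyclic: its reachability relation is antisymmetric. -/
def acyclic (adj : V → V → Prop) : Prop :=
  ∀ v w, reach adj v w → reach adj w v → v = w

/-- A leaf is a `⪯`-minimal vertex. -/
def leaf (adj : V → V → Prop) (x : V) : Prop :=
  ∀ v, reach adj v x → v = x

/-- The set of leaves of the digraph. -/
def leaves (adj : V → V → Prop) : Set V := {x | leaf adj x}

/-- The cluster of `v`: all leaves that are descendants of `v`. -/
def cluster (adj : V → V → Prop) (v : V) : Set V :=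
  {x | leaf adj x ∧ reach adj x v}

/-- The clustering system of the digraph. -/
def clusters (adj : V → V → Prop) : Set (Set V) := {C | ∃ v, C = cluster adj v}

/-- `w` is a least common ancestor of `A`: a `⪯`-minimal common ancestor of `A`. -/
def isLCA (adj : V → V → Prop) (A : Set V) (w : V) : Prop :=
  (∀ a ∈ A, reach adj a w) ∧ ∀ u, (∀ a ∈ A, reach adj a u) → reach adj u w → u = w

/-- `A` has a unique least common ancestor. -/
def hasUniqueLCA (adj : V → V → Prop) (A : Set V) : Prop := ∃! w, isLCA adj A w

end Dag

namespace Dag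

variable {V : Type*} {adj : V → V → Prop}

theorem wellFounded_reach_ne [Finite V] (hacy : acyclic adj) :
    WellFounded fun a b : V => reach adj a b ∧ a ≠ b := by
  have : IsTrans V fun a b => reach adj a b ∧ a ≠ b :=
    ⟨fun a b c hab hbc => ⟨hab.1.trans hbc.1, fun hac => hbc.2 (hacy _ _ hbc.1 (hac ▸ hab.1))⟩⟩
  have : Std.Irrefl fun a b : V => reach adj a b ∧ a ≠ b := ⟨fun _ h => h.2 rfl⟩
  exact Finite.wellFounded_of_trans_of_irrefl _

theorem exists_isLCA_reach [Finite V] (hacy : acyclic adj) {A : Set V} {v : V}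
    (hv : ∀ a ∈ A, reach adj a v) : ∃ m, isLCA adj A m ∧ reach adj m v := by
  obtain ⟨m, ⟨hmA, hmv⟩, hmin⟩ := (wellFounded_reach_ne hacy).has_min
    {u | (∀ a ∈ A, reach adj a u) ∧ reach adj u v} ⟨v, hv, .refl⟩
  refine ⟨m, ⟨hmA, fun u huA hum => ?_⟩, hmv⟩
  by_contra hne
  exact hmin u ⟨huA, hum.trans hmv⟩ ⟨hum, hne⟩

theorem cluster_eq_of_isLCA_of_reach {v w : V} (hw : isLCA adj (cluster adj v) w)
    (hwv : reach adj w v) : cluster adj w = cluster adj v :=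
  Set.Subset.antisymm (fun _ hx => ⟨hx.1, hx.2.trans hwv⟩) fun x hx => ⟨hx.1, hw.1 x hx⟩

end Dag

/-- If `lca(𝒞(v))` is defined for all `v`, then `𝒞(lca(𝒞(v))) = 𝒞(v)`. -/
theorem stmt13 {V : Type*} [Fintype V] (adj : V → V → Prop) (hacy : Dag.acyclic adj)
    (hCL : ∀ v : V, Dag.hasUniqueLCA adj (Dag.cluster adj v)) :
    ∀ v w : V, Dag.isLCA adj (Dag.cluster adj v) w →
      Dag.cluster adj w = Dag.cluster adj v := by
  intro v w hw
  obtain ⟨m, hm, hmv⟩ := Dag.exists_isLCA_reach hacy fun x (hx : x ∈ Dag.cluster adj v) => hx.2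
  obtain ⟨_, _, hunique⟩ := hCL v
  have hwm : w = m := (hunique w hw).trans (hunique m hm).symm
  exact Dag.cluster_eq_of_isLCA_of_reach hw (hwm ▸ hmv)
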